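/- For a dual quaternion h = p + qε with p·q̄ + q·p̄ = 0 and p·p̄ ≠ 0, the map v ↦ φ(h, v) = (p·v·p̄ + p·q̄ − q·p̄)/(p·p̄) sends pure quaternions to pure quaternions. -/

import Mathlib

/-!
Conjugation `v ↦ p v p̄` multiplies the real part by `|p|²`, and `p q̄ − q p̄ = x − x̄` with
`x = p q̄` is pure; dividing by the real number `p p̄ = |p|²` keeps the real part zero.
-/

/-- The Study kinematic map `φ(p + qε, v) = (p v p̄ + p q̄ − q p̄)/(p p̄)`. -/
noncomputable def phi (p q v : Quaternion ℝ) : Quaternion ℝ :=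
  (p * v * star p + p * star q - q * star p) / (p * star p)

namespace Quaternion

theorem re_mul_comm {R : Type*} [CommRing R] (a b : ℍ[R]) : (a * b).re = (b * a).re := by
  simp only [re_mul]
  ring

theorem re_mul_mul_star {R : Type*} [CommRing R] (p v : ℍ[R]) :
    (p * v * star p).re = normSq p * v.re := by
  rw [re_mul_comm, ← mul_assoc, star_mul_self, coe_mul_eq_smul, re_smul, smul_eq_mul]

theorem re_sub_star {R : Type*} [CommRing R] (a : ℍ[R]) : (a - star a).re = 0 := by
  rw [re_sub, re_star, sub_self]

theorem re_div_coe {R : Type*} [Field R] [LinearOrder R] [IsStrictOrderedRing R]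
    (a : ℍ[R]) (r : R) : (a / r).re = a.re / r := by
  rw [div_eq_mul_inv, ← coe_inv, mul_coe_eq_smul, re_smul, smul_eq_mul, inv_mul_eq_div]

end Quaternion

theorem study_map_pure_general (p q v : Quaternion ℝ)
    (hv : v.re = 0) :
    (phi p q v).re = 0 := by
  have hqp : q * star p = star (p * star q) := by rw [star_mul, star_star]
  rw [phi, Quaternion.self_mul_star, Quaternion.re_div_coe, add_sub_assoc, hqp,
    Quaternion.re_add, Quaternion.re_mul_mul_star, Quaternion.re_sub_star, hv, mul_zero,
    add_zero, zero_div]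

/-- The Study kinematic map sends pure quaternions to pure quaternions. -/
theorem study_map_pure (p q v : Quaternion ℝ)
    (hstudy : p * star q + q * star p = 0)
    (hp : p * star p ≠ 0) (hv : v.re = 0) :
    (phi p q v).re = 0 :=
  study_map_pure_general p q v hv
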